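/- arXiv:1902.06891 — 2 statements merged into one kernel-verified Lean document; each statement's English description precedes it below -/
import Mathlib

section
/- Let T = 2^n with n ≥ 1 and suppose log T is odd. For each level i with 0 ≤ i ≤ log T − 1, let a_i be chosen independently and uniformly at random from {0, 1, ..., log T}. Then for any fixed nonnegative integer x̄, the probability that Σ_{i=0}^{log T − 1} a_i · 2^i = x̄ is at most 1/T. -/
/-!
Write `n = 2m + 1`, so each digit `a i` ranges over `n + 1 = 2(m + 1)` values. Two digit
tuples with the same weighted sum `∑ a i * 2^i` and the same halves `a i / 2` coincide: the
sum fixes `a 0` modulo 2, hence `a 0`, and one recurses on the remaining digits. So the tuples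
landing on `x` inject into their tuples of halves, of which there are `(m + 1)^n`, and dividing
by `(n + 1)^n = 2^n (m + 1)^n` gives `1 / 2^n`.
-/

open Finset

theorem sum_univ_succ_mul_pow {M : Type*} [CommSemiring M] (n : ℕ) (b : M) (a : Fin (n + 1) → M) :
    ∑ i, a i * b ^ (i : ℕ) = a 0 + b * ∑ i : Fin n, a i.succ * b ^ (i : ℕ) := by
  simp only [Fin.sum_univ_succ, Fin.val_zero, pow_zero, mul_one, Fin.val_succ, pow_succ, mul_sum]
  congr 1
  exact sum_congr rfl fun _ _ => by ring

theorem eq_of_sum_mul_pow_eq_of_div_eq {b : ℕ} (hb : 0 < b) :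
    ∀ {n : ℕ} {a c : Fin n → ℕ}, ∑ i, a i * b ^ (i : ℕ) = ∑ i, c i * b ^ (i : ℕ) →
      (∀ i, a i / b = c i / b) → a = c
  | 0, _, _, _, _ => funext fun i => i.elim0
  | n + 1, a, c, hsum, hdiv => by
    rw [sum_univ_succ_mul_pow, sum_univ_succ_mul_pow] at hsum
    have hmod : a 0 % b = c 0 % b := by
      simpa [Nat.add_mul_mod_self_left] using congrArg (· % b) hsum
    have h0 : a 0 = c 0 := by
      rw [← Nat.div_add_mod (a 0) b, ← Nat.div_add_mod (c 0) b, hdiv 0, hmod]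
    have htail : (fun i : Fin n => a i.succ) = fun i => c i.succ := by
      refine eq_of_sum_mul_pow_eq_of_div_eq hb ?_ fun i => hdiv i.succ
      rw [h0] at hsum
      exact Nat.eq_of_mul_eq_mul_left hb (Nat.add_left_cancel hsum)
    funext i
    cases i using Fin.cases with
    | zero => exact h0
    | succ j => exact congrFun htail j

theorem card_filter_sum_mul_pow_eq_le {b N k : ℕ} (hb : 0 < b) (hN : N ≤ b * k) (n x : ℕ) :
    #{a : Fin n → Fin N | ∑ i, (a i : ℕ) * b ^ (i : ℕ) = x} ≤ k ^ n := by
  have hquot (a : Fin n → Fin N) (i : Fin n) : (a i : ℕ) / b < k :=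
    Nat.div_lt_of_lt_mul ((a i).isLt.trans_le hN)
  calc #{a : Fin n → Fin N | ∑ i, (a i : ℕ) * b ^ (i : ℕ) = x}
      ≤ #(univ : Finset (Fin n → Fin k)) := by
        refine card_le_card_of_injOn (fun a i => ⟨a i / b, hquot a i⟩)
          (fun _ _ => mem_coe.2 (mem_univ _)) fun a ha c hc hac => ?_
        simp only [coe_filter, mem_univ, true_and, Set.mem_ofPred_eq] at ha hc
        have h := eq_of_sum_mul_pow_eq_of_div_eq hb (a := fun i => (a i : ℕ))
          (c := fun i => (c i : ℕ)) (ha.trans hc.symm) fun i => congrArg Fin.val (congrFun hac i)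
        exact funext fun i => Fin.ext (congrFun h i)
    _ = k ^ n := by simp

theorem spray_landing_prob_le_general (n : ℕ) (hodd : Odd n) (x : ℕ) :
    (((Finset.univ.filter
        (fun a : Fin n → Fin (n + 1) => ∑ i : Fin n, (a i : ℕ) * 2 ^ (i : ℕ) = x)).card : ℝ)
      / (Fintype.card (Fin n → Fin (n + 1)) : ℝ)) ≤ 1 / (2 ^ n : ℝ) := by
  obtain ⟨m, rfl⟩ := hodd
  have hcard := card_filter_sum_mul_pow_eq_le two_pos (N := 2 * m + 1 + 1) (k := m + 1) (by omega) (2 * m + 1) x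
  have hsplit : ((2 * m + 1 : ℕ) : ℝ) + 1 = 2 * (m + 1) := by push_cast; ring
  rw [Fintype.card_fun, Fintype.card_fin, Fintype.card_fin, Nat.cast_pow, Nat.cast_succ, hsplit,
    mul_pow]
  calc _ ≤ ((m + 1 : ℕ) : ℝ) ^ (2 * m + 1) / (2 ^ (2 * m + 1) * ((m : ℝ) + 1) ^ (2 * m + 1)) := by
        gcongr; exact_mod_cast hcard
    _ = 1 / 2 ^ (2 * m + 1) := by push_cast; field_simp

/-- Let `T = 2^n` with `n ≥ 1`, and suppose `log T = n` is odd. If each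
`a i` (for `i < n`) is chosen independently and uniformly from `{0, …, n}` (modeled as
the uniform choice of a tuple `a : Fin n → Fin (n+1)`), then for any fixed `x̄`, the
probability that `∑ i, a i * 2^i = x̄` is at most `1/T`. -/
theorem spray_landing_prob_le (n : ℕ) (hn : 1 ≤ n) (hodd : Odd n) (x : ℕ) :
    (((Finset.univ.filter
        (fun a : Fin n → Fin (n + 1) => ∑ i : Fin n, (a i : ℕ) * 2 ^ (i : ℕ) = x)).card : ℝ)
      / (Fintype.card (Fin n → Fin (n + 1)) : ℝ)) ≤ 1 / (2 ^ n : ℝ) :=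
  spray_landing_prob_le_general n hodd x
end

section
/- Let T = 2^n with n ≥ 2. In a perfect skip graph, the maximum position reachable by any SPRAY(log T − 1, log T, 1)_j operation, over all lists j in the maximum level, is T/2 + log T · (T − 1) − 1. -/
open Finset

lemma Fin.sum_two_pow (n : ℕ) : ∑ i : Fin n, 2 ^ (i : ℕ) = 2 ^ n - 1 := by
  rw [Fin.sum_univ_eq_sum_range (2 ^ ·), Nat.geomSum_eq le_rfl, Nat.div_one]

lemma Fin.sum_mul_two_pow_le {n c : ℕ} {a : Fin n → ℕ} (ha : ∀ i, a i ≤ c) :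
    ∑ i : Fin n, a i * 2 ^ (i : ℕ) ≤ c * (2 ^ n - 1) := by
  rw [← Fin.sum_two_pow, Finset.mul_sum]
  exact Finset.sum_le_sum fun i _ => Nat.mul_le_mul_right _ (ha i)

theorem spray_sg_max_reach_general (n : ℕ) :
    (∀ p < 2 ^ (n - 1), ∀ a : Fin n → ℕ, (∀ i, a i ≤ n) →
        p + ∑ i : Fin n, a i * 2 ^ (i : ℕ) ≤ 2 ^ (n - 1) + n * (2 ^ n - 1) - 1) ∧
    (∃ p < 2 ^ (n - 1), ∃ a : Fin n → ℕ, (∀ i, a i ≤ n) ∧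
        p + ∑ i : Fin n, a i * 2 ^ (i : ℕ) = 2 ^ (n - 1) + n * (2 ^ n - 1) - 1) := by
  have hhead : 1 ≤ 2 ^ (n - 1) := Nat.one_le_two_pow
  constructor
  · intro p hp a ha
    have := Fin.sum_mul_two_pow_le ha
    omega
  · refine ⟨2 ^ (n - 1) - 1, by omega, fun _ => n, fun _ => le_rfl, ?_⟩
    rw [← Finset.mul_sum, Fin.sum_two_pow]
    omega

/-- Let `T = 2^n` with `n ≥ 2`. In a perfect skip graph, a
`SPRAY(log T − 1, log T, 1)_j` operation starts at the head of list `j` of the maximum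
level (these heads occupy positions `0, …, 2^(n-1) − 1`) and moves forward `a i ∈ [0, n]`
nodes at each level `i`, each forward step at level `i` advancing the position by `2^i`.
The maximum position reachable over all lists `j` and all such walks is
`T/2 + log T · (T − 1) − 1 = 2^(n-1) + n·(2^n − 1) − 1`. -/
theorem spray_sg_max_reach (n : ℕ) (hn : 2 ≤ n) :
    (∀ p < 2 ^ (n - 1), ∀ a : Fin n → ℕ, (∀ i, a i ≤ n) →
        p + ∑ i : Fin n, a i * 2 ^ (i : ℕ) ≤ 2 ^ (n - 1) + n * (2 ^ n - 1) - 1) ∧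
    (∃ p < 2 ^ (n - 1), ∃ a : Fin n → ℕ, (∀ i, a i ≤ n) ∧
        p + ∑ i : Fin n, a i * 2 ^ (i : ℕ) = 2 ^ (n - 1) + n * (2 ^ n - 1) - 1) :=
  spray_sg_max_reach_general n
end
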